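/- Let φ < 1 and ψ < 1−φ, and define κ₁ := 2−φ−ψ, κ₂ := 3−φ, κ₃ := 2−φ (so κ₁ > 1, κ₂ > 2, κ₃ > 1). Then there exist constants 0 < c₁ ≤ c₂ such that: for all x ≥ 1, c₁ x^{−κ₁} ≤ 𝓕(x) ≤ c₂ x^{−κ₁}, c₁ x^{−κ₂} ≤ 𝒦(x) ≤ c₂ x^{−κ₂}, and c₁ x^{−κ₃} ≤ 𝒥(x) ≤ c₂ x^{−κ₃}; and for all x ∈ [0, 1], each of 𝓕(x), 𝒦(x), 𝒥(x) lies in [c₁, c₂]. -/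

import Mathlib

open MeasureTheory Real Set

/-- `C_φ = (2−φ)/(1−φ)`, the right endpoint of the support of the power-law density. -/
noncomputable def Cphi (φ : ℝ) : ℝ := (2 - φ) / (1 - φ)

/-- The power-law density `p(λ) = (1−φ) C_φ^{φ−1} λ^{−φ}` on `(0, C_φ)`. -/
noncomputable def pden (φ l : ℝ) : ℝ := (1 - φ) * Cphi φ ^ (φ - 1) * l ^ (-φ)

/-- `𝓕(x) = ∫₀^{C_φ} λ^{1−ψ} e^{−2λx} p(λ) dλ`. -/
noncomputable def calF (φ ψ x : ℝ) : ℝ :=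
  ∫ l in Set.Ioo (0:ℝ) (Cphi φ), l ^ (1 - ψ) * Real.exp (-2 * l * x) * pden φ l

/-- `𝒦(x) = ∫₀^{C_φ} λ² e^{−2λx} p(λ) dλ`. -/
noncomputable def calK (φ x : ℝ) : ℝ :=
  ∫ l in Set.Ioo (0:ℝ) (Cphi φ), l ^ 2 * Real.exp (-2 * l * x) * pden φ l

/-- `𝒥(x) = ∫₀^{C_φ} λ e^{−2λx} p(λ) dλ`. -/
noncomputable def calJ (φ x : ℝ) : ℝ :=
  ∫ l in Set.Ioo (0:ℝ) (Cphi φ), l * Real.exp (-2 * l * x) * pden φ l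

lemma aux_cont (β x : ℝ) (hβ : 0 ≤ β) :
    Continuous (fun l : ℝ => l ^ β * Real.exp (-2 * l * x)) :=
  (Real.continuous_rpow_const hβ).mul (Real.continuous_exp.comp (by continuity))

lemma aux_int (β x C : ℝ) (hβ : 0 ≤ β) :
    IntegrableOn (fun l : ℝ => l ^ β * Real.exp (-2 * l * x)) (Set.Ioo 0 C) :=
  ((aux_cont β x hβ).integrableOn_Icc).mono_set Set.Ioo_subset_Icc_self

lemma aux_int_pow (β C : ℝ) (hβ : 0 ≤ β) :
    IntegrableOn (fun l : ℝ => l ^ β) (Set.Ioo 0 C) :=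
  ((Real.continuous_rpow_const hβ).integrableOn_Icc).mono_set Set.Ioo_subset_Icc_self

lemma aux_nonneg (β C x : ℝ) :
    0 ≤ᵐ[volume.restrict (Set.Ioo (0:ℝ) C)] fun l : ℝ => l ^ β * Real.exp (-2 * l * x) := by
  refine (ae_restrict_iff' measurableSet_Ioo).mpr (Filter.Eventually.of_forall fun l hl => ?_)
  have := hl.1
  positivity

lemma int_rpow_Ioo (β T : ℝ) (hβ : 0 < β) (hT : 0 ≤ T) :
    ∫ l in Set.Ioo (0:ℝ) T, l ^ β = T ^ (β + 1) / (β + 1) := by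
  rw [← MeasureTheory.integral_Ioc_eq_integral_Ioo, ← intervalIntegral.integral_of_le hT,
    integral_rpow (Or.inl (by linarith)), Real.zero_rpow (by positivity), sub_zero]

lemma aux_int_Ioi (β x : ℝ) (hβ : -1 < β) (hx : 0 < x) :
    IntegrableOn (fun l : ℝ => l ^ β * Real.exp (-2 * l * x)) (Set.Ioi 0) := by
  have := integrableOn_rpow_mul_exp_neg_mul_rpow (p := 1) (s := β) (b := 2 * x) hβ one_pos
    (by positivity)
  refine this.congr_fun (fun l hl => ?_) measurableSet_Ioi
  beta_reduce
  rw [Real.rpow_one]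
  ring_nf

lemma aux_int_Ioi_eq (β x : ℝ) (hβ : 0 < β) (hx : 0 < x) :
    ∫ l in Set.Ioi (0:ℝ), l ^ β * Real.exp (-2 * l * x)
      = Real.Gamma (β + 1) * (1 / 2) ^ (β + 1) * x ^ (-(β + 1)) := by
  have h := Real.integral_rpow_mul_exp_neg_mul_Ioi (a := β + 1) (r := 2 * x)
    (by linarith) (by positivity)
  have h2 : ∫ l in Set.Ioi (0:ℝ), l ^ β * Real.exp (-2 * l * x)
      = ∫ t in Set.Ioi (0:ℝ), t ^ (β + 1 - 1) * Real.exp (-(2 * x * t)) := by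
    refine setIntegral_congr_fun measurableSet_Ioi (fun t ht => ?_)
    ring_nf
  rw [h2, h]
  have hxne : (0:ℝ) < x := hx
  rw [one_div, mul_inv, ← one_div, Real.mul_rpow (by positivity) (by positivity),
    ← Real.rpow_neg_one x, ← Real.rpow_mul hx.le]
  ring_nf

lemma key (β C : ℝ) (hβ : 0 < β) (hC : 1 ≤ C) :
    ∃ a b : ℝ, 0 < a ∧ a ≤ b ∧
      (∀ x : ℝ, 1 ≤ x →
        a * x ^ (-(β + 1)) ≤ (∫ l in Set.Ioo (0:ℝ) C, l ^ β * Real.exp (-2 * l * x)) ∧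
        (∫ l in Set.Ioo (0:ℝ) C, l ^ β * Real.exp (-2 * l * x)) ≤ b * x ^ (-(β + 1))) ∧
      (∀ x ∈ Set.Icc (0:ℝ) 1,
        a ≤ (∫ l in Set.Ioo (0:ℝ) C, l ^ β * Real.exp (-2 * l * x)) ∧
        (∫ l in Set.Ioo (0:ℝ) C, l ^ β * Real.exp (-2 * l * x)) ≤ b) := by
  have hC0 : (0:ℝ) < C := lt_of_lt_of_le one_pos hC
  have hb1 : 0 < β + 1 := by linarith
  have hCp : 0 < C ^ (β + 1) := Real.rpow_pos_of_pos hC0 _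
  refine ⟨min (Real.exp (-2) / (β + 1)) (Real.exp (-2 * C) * (C ^ (β + 1) / (β + 1))),
    max (Real.Gamma (β + 1) * (1 / 2) ^ (β + 1)) (C ^ (β + 1) / (β + 1)), ?_, ?_, ?_, ?_⟩
  · have h1 : 0 < Real.exp (-2) / (β + 1) := by positivity
    have h2 : 0 < Real.exp (-2 * C) * (C ^ (β + 1) / (β + 1)) := by positivity
    exact lt_min h1 h2
  · refine le_trans (min_le_right _ _) (le_trans ?_ (le_max_right _ _))
    have : Real.exp (-2 * C) ≤ 1 := Real.exp_le_one_iff.mpr (by nlinarith)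
    nlinarith [div_pos hCp hb1]
  · intro x hx
    have hx0 : 0 < x := lt_of_lt_of_le one_pos hx
    have hxp : (0:ℝ) ≤ x ^ (-(β + 1)) := (Real.rpow_pos_of_pos hx0 _).le
    constructor
    · -- lower bound
      have hsub : Set.Ioo (0:ℝ) (1 / x) ⊆ Set.Ioo 0 C := by
        apply Set.Ioo_subset_Ioo le_rfl
        rw [div_le_iff₀ hx0]; nlinarith
      have step1 : (∫ l in Set.Ioo (0:ℝ) (1 / x), l ^ β * Real.exp (-2 * l * x))
          ≤ ∫ l in Set.Ioo (0:ℝ) C, l ^ β * Real.exp (-2 * l * x) :=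
        setIntegral_mono_set (aux_int β x C hβ.le) (aux_nonneg β C x) hsub.eventuallyLE
      have step2 : (∫ l in Set.Ioo (0:ℝ) (1 / x), Real.exp (-2) * l ^ β)
          ≤ ∫ l in Set.Ioo (0:ℝ) (1 / x), l ^ β * Real.exp (-2 * l * x) := by
        refine setIntegral_mono_on ((aux_int_pow β (1/x) hβ.le).const_mul _)
          (aux_int β x (1/x) hβ.le) measurableSet_Ioo (fun l hl => ?_)
        have hl0 : 0 < l := hl.1
        have hl2 : l * x < 1 := by
          have := hl.2; rw [lt_div_iff₀ hx0] at this; linarith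
        have : Real.exp (-2) ≤ Real.exp (-2 * l * x) := by
          apply Real.exp_le_exp.mpr; nlinarith
        have hlb : (0:ℝ) ≤ l ^ β := (Real.rpow_pos_of_pos hl0 _).le
        nlinarith
      have heq : (∫ l in Set.Ioo (0:ℝ) (1 / x), Real.exp (-2) * l ^ β)
          = Real.exp (-2) / (β + 1) * x ^ (-(β + 1)) := by
        rw [integral_const_mul, int_rpow_Ioo β (1/x) hβ (by positivity),
          one_div, ← Real.rpow_neg_one x, ← Real.rpow_mul hx0.le]
        ring_nf
      have : min (Real.exp (-2) / (β + 1)) (Real.exp (-2 * C) * (C ^ (β + 1) / (β + 1)))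
          * x ^ (-(β + 1)) ≤ Real.exp (-2) / (β + 1) * x ^ (-(β + 1)) :=
        mul_le_mul_of_nonneg_right (min_le_left _ _) hxp
      linarith [this, heq ▸ step2, step1]
    · -- upper bound
      have step1 : (∫ l in Set.Ioo (0:ℝ) C, l ^ β * Real.exp (-2 * l * x))
          ≤ ∫ l in Set.Ioi (0:ℝ), l ^ β * Real.exp (-2 * l * x) := by
        refine setIntegral_mono_set (aux_int_Ioi β x (by linarith) hx0) ?_
          (Set.Ioo_subset_Ioi_self.eventuallyLE)
        refine (ae_restrict_iff' measurableSet_Ioi).mpr (Filter.Eventually.of_forall fun l hl => ?_)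
        have : (0:ℝ) < l := hl
        positivity
      rw [aux_int_Ioi_eq β x hβ hx0] at step1
      refine le_trans step1 (mul_le_mul_of_nonneg_right (le_max_left _ _) hxp)
  · intro x hx
    obtain ⟨hx0, hx1⟩ := hx
    constructor
    · have step2 : (∫ l in Set.Ioo (0:ℝ) C, Real.exp (-2 * C) * l ^ β)
          ≤ ∫ l in Set.Ioo (0:ℝ) C, l ^ β * Real.exp (-2 * l * x) := by
        refine setIntegral_mono_on ((aux_int_pow β C hβ.le).const_mul _)
          (aux_int β x C hβ.le) measurableSet_Ioo (fun l hl => ?_)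
        have hl0 : 0 < l := hl.1
        have hlC : l < C := hl.2
        have : Real.exp (-2 * C) ≤ Real.exp (-2 * l * x) := by
          apply Real.exp_le_exp.mpr; nlinarith
        have hlb : (0:ℝ) ≤ l ^ β := (Real.rpow_pos_of_pos hl0 _).le
        nlinarith
      rw [integral_const_mul, int_rpow_Ioo β C hβ hC0.le] at step2
      exact le_trans (min_le_right _ _) step2
    · have step2 : (∫ l in Set.Ioo (0:ℝ) C, l ^ β * Real.exp (-2 * l * x))
          ≤ ∫ l in Set.Ioo (0:ℝ) C, l ^ β := by
        refine setIntegral_mono_on (aux_int β x C hβ.le)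
          (aux_int_pow β C hβ.le) measurableSet_Ioo (fun l hl => ?_)
        have hl0 : 0 < l := hl.1
        have : Real.exp (-2 * l * x) ≤ 1 := Real.exp_le_one_iff.mpr (by nlinarith)
        have hlb : (0:ℝ) ≤ l ^ β := (Real.rpow_pos_of_pos hl0 _).le
        nlinarith
      rw [int_rpow_Ioo β C hβ hC0.le] at step2
      exact le_trans step2 (le_max_right _ _)
lemma one_le_Cphi (φ : ℝ) (hφ : φ < 1) : 1 ≤ Cphi φ := by
  rw [Cphi, le_div_iff₀ (by linarith)]; linarith

lemma calF_eq (φ ψ x : ℝ) :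
    calF φ ψ x = ((1 - φ) * Cphi φ ^ (φ - 1)) *
      ∫ l in Set.Ioo (0:ℝ) (Cphi φ), l ^ (1 - ψ - φ) * Real.exp (-2 * l * x) := by
  rw [calF, ← integral_const_mul]
  refine setIntegral_congr_fun measurableSet_Ioo fun l hl => ?_
  have h : l ^ (1 - ψ) * l ^ (-φ) = l ^ (1 - ψ - φ) := by
    rw [← Real.rpow_add hl.1]; ring_nf
  rw [pden, ← h]; ring

lemma calK_eq (φ x : ℝ) :
    calK φ x = ((1 - φ) * Cphi φ ^ (φ - 1)) *
      ∫ l in Set.Ioo (0:ℝ) (Cphi φ), l ^ (2 - φ) * Real.exp (-2 * l * x) := by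
  rw [calK, ← integral_const_mul]
  refine setIntegral_congr_fun measurableSet_Ioo fun l hl => ?_
  have h : l ^ (2:ℕ) * l ^ (-φ) = l ^ (2 - φ) := by
    rw [← Real.rpow_natCast l 2, ← Real.rpow_add hl.1]; ring_nf
  rw [pden, ← h]; ring

lemma calJ_eq (φ x : ℝ) :
    calJ φ x = ((1 - φ) * Cphi φ ^ (φ - 1)) *
      ∫ l in Set.Ioo (0:ℝ) (Cphi φ), l ^ (1 - φ) * Real.exp (-2 * l * x) := by
  rw [calJ, ← integral_const_mul]
  refine setIntegral_congr_fun measurableSet_Ioo fun l hl => ?_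
  have h : l * l ^ (-φ) = l ^ (1 - φ) := by
    nth_rewrite 1 [← Real.rpow_one l]
    rw [← Real.rpow_add hl.1]; ring_nf
  rw [pden, ← h]; ring

lemma lower_help {K m a t I : ℝ} (hK : 0 ≤ K) (hm : m ≤ a) (ht : 0 ≤ t) (h : a * t ≤ I) :
    K * m * t ≤ K * I := by
  rw [mul_assoc]
  exact mul_le_mul_of_nonneg_left (le_trans (mul_le_mul_of_nonneg_right hm ht) h) hK

lemma upper_help {K M b t I : ℝ} (hK : 0 ≤ K) (hb : b ≤ M) (ht : 0 ≤ t) (h : I ≤ b * t) :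
    K * I ≤ K * M * t := by
  rw [mul_assoc]
  exact mul_le_mul_of_nonneg_left (le_trans h (mul_le_mul_of_nonneg_right hb ht)) hK

/-- Sharp power-law asymptotics of `𝓕`, `𝒦`, `𝒥`: of order `x^{−κ₁}`, `x^{−κ₂}`, `x^{−κ₃}`
for `x ≥ 1` (with `κ₁ = 2−φ−ψ`, `κ₂ = 3−φ`, `κ₃ = 2−φ`), and of order `1` for `x ∈ [0,1]`. -/
theorem power_law_kernel_asymptotics (φ ψ : ℝ) (hφ : φ < 1) (hψ : ψ < 1 - φ) :
    ∃ c₁ c₂ : ℝ, 0 < c₁ ∧ c₁ ≤ c₂ ∧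
      (∀ x : ℝ, 1 ≤ x →
        (c₁ * x ^ (-(2 - φ - ψ)) ≤ calF φ ψ x ∧ calF φ ψ x ≤ c₂ * x ^ (-(2 - φ - ψ))) ∧
        (c₁ * x ^ (-(3 - φ)) ≤ calK φ x ∧ calK φ x ≤ c₂ * x ^ (-(3 - φ))) ∧
        (c₁ * x ^ (-(2 - φ)) ≤ calJ φ x ∧ calJ φ x ≤ c₂ * x ^ (-(2 - φ)))) ∧
      (∀ x ∈ Set.Icc (0:ℝ) 1,
        (c₁ ≤ calF φ ψ x ∧ calF φ ψ x ≤ c₂) ∧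
        (c₁ ≤ calK φ x ∧ calK φ x ≤ c₂) ∧
        (c₁ ≤ calJ φ x ∧ calJ φ x ≤ c₂)) := by
  have hC := one_le_Cphi φ hφ
  have hC0 : (0:ℝ) < Cphi φ := lt_of_lt_of_le one_pos hC
  have hK : 0 < (1 - φ) * Cphi φ ^ (φ - 1) := by
    have h1 : (0:ℝ) < 1 - φ := by linarith
    have h2 : (0:ℝ) < Cphi φ ^ (φ - 1) := Real.rpow_pos_of_pos hC0 _
    positivity
  obtain ⟨a₁, b₁, ha₁, hab₁, hA₁, hB₁⟩ := key (1 - ψ - φ) (Cphi φ) (by linarith) hC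
  obtain ⟨a₂, b₂, ha₂, hab₂, hA₂, hB₂⟩ := key (2 - φ) (Cphi φ) (by linarith) hC
  obtain ⟨a₃, b₃, ha₃, hab₃, hA₃, hB₃⟩ := key (1 - φ) (Cphi φ) (by linarith) hC
  have hmin : 0 < min a₁ (min a₂ a₃) := lt_min ha₁ (lt_min ha₂ ha₃)
  have hm1 : min a₁ (min a₂ a₃) ≤ a₁ := min_le_left _ _
  have hm2 : min a₁ (min a₂ a₃) ≤ a₂ := le_trans (min_le_right _ _) (min_le_left _ _)
  have hm3 : min a₁ (min a₂ a₃) ≤ a₃ := le_trans (min_le_right _ _) (min_le_right _ _)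
  have hM1 : b₁ ≤ max b₁ (max b₂ b₃) := le_max_left _ _
  have hM2 : b₂ ≤ max b₁ (max b₂ b₃) := le_trans (le_max_left _ _) (le_max_right _ _)
  have hM3 : b₃ ≤ max b₁ (max b₂ b₃) := le_trans (le_max_right _ _) (le_max_right _ _)
  refine ⟨(1 - φ) * Cphi φ ^ (φ - 1) * min a₁ (min a₂ a₃),
    (1 - φ) * Cphi φ ^ (φ - 1) * max b₁ (max b₂ b₃), by positivity, ?_, ?_, ?_⟩
  · exact mul_le_mul_of_nonneg_left (le_trans hm1 (le_trans hab₁ hM1)) hK.le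
  · intro x hx
    have hx0 : (0:ℝ) ≤ x := by linarith
    have e₁ : -(2 - φ - ψ) = -((1 - ψ - φ) + 1) := by ring
    have e₂ : -(3 - φ) = -((2 - φ) + 1) := by ring
    have e₃ : -(2 - φ) = -((1 - φ) + 1) := by ring
    refine ⟨⟨?_, ?_⟩, ⟨?_, ?_⟩, ⟨?_, ?_⟩⟩
    · rw [e₁, calF_eq]
      exact lower_help hK.le hm1 (Real.rpow_nonneg hx0 _) (hA₁ x hx).1
    · rw [e₁, calF_eq]
      exact upper_help hK.le hM1 (Real.rpow_nonneg hx0 _) (hA₁ x hx).2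
    · rw [e₂, calK_eq]
      exact lower_help hK.le hm2 (Real.rpow_nonneg hx0 _) (hA₂ x hx).1
    · rw [e₂, calK_eq]
      exact upper_help hK.le hM2 (Real.rpow_nonneg hx0 _) (hA₂ x hx).2
    · rw [e₃, calJ_eq]
      exact lower_help hK.le hm3 (Real.rpow_nonneg hx0 _) (hA₃ x hx).1
    · rw [e₃, calJ_eq]
      exact upper_help hK.le hM3 (Real.rpow_nonneg hx0 _) (hA₃ x hx).2
  · intro x hx
    refine ⟨⟨?_, ?_⟩, ⟨?_, ?_⟩, ⟨?_, ?_⟩⟩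
    · rw [calF_eq]
      exact mul_le_mul_of_nonneg_left (le_trans hm1 (hB₁ x hx).1) hK.le
    · rw [calF_eq]
      exact mul_le_mul_of_nonneg_left (le_trans (hB₁ x hx).2 hM1) hK.le
    · rw [calK_eq]
      exact mul_le_mul_of_nonneg_left (le_trans hm2 (hB₂ x hx).1) hK.le
    · rw [calK_eq]
      exact mul_le_mul_of_nonneg_left (le_trans (hB₂ x hx).2 hM2) hK.le
    · rw [calJ_eq]
      exact mul_le_mul_of_nonneg_left (le_trans hm3 (hB₃ x hx).1) hK.le
    · rw [calJ_eq]
      exact mul_le_mul_of_nonneg_left (le_trans (hB₃ x hx).2 hM3) hK.le
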